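/- arXiv:quant-ph/0008059 — 2 statements merged into one kernel-verified Lean document; each statement's English description precedes it below -/
import Mathlib

section
/- Let q be an odd prime power and define the q×q Legendre matrix L over ℤ (or ℝ) indexed by 𝔽_q with L_{ij} = χ(i+j), where χ is the quadratic character. Then Lᵀ·L = q·I − J, where J is the all-ones q×q matrix. -/
open scoped Classical

/-- The quadratic character of a finite field: `0` at `0`, `1` on nonzero
squares, `-1` on nonsquares. -/
noncomputable def qchar {F : Type*} [Field F] (x : F) : ℤ :=
  if x = 0 then 0 else if IsSquare x then 1 else -1

section aux
variable {F : Type*} [Field F] [Fintype F]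

lemma qchar_eq [DecidableEq F] (x : F) : qchar x = quadraticChar F x := by
  rw [quadraticChar_apply, quadraticCharFun, qchar]
  split_ifs <;> rfl

lemma key_sum (hF : ringChar F ≠ 2) {a : F} (ha : a ≠ 0) :
    ∑ x : F, quadraticChar F x * quadraticChar F (x + a) = -1 := by
  classical
  have h0 : ∑ x : F, quadraticChar F x * quadraticChar F (x + a)
      = ∑ x ∈ Finset.univ.filter (· ≠ (0:F)), quadraticChar F (1 + a * x⁻¹) := by
    rw [Finset.sum_filter]
    apply Finset.sum_congr rfl
    intro x _
    by_cases hx : x = 0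
    · simp [hx]
    · rw [if_pos hx]
      have hx' : (x + a) = x * (1 + a * x⁻¹) := by field_simp
      rw [hx', map_mul, ← mul_assoc, ← sq, quadraticChar_sq_one hx, one_mul]
  have h1 : ∑ x ∈ Finset.univ.filter (· ≠ (0:F)), quadraticChar F (1 + a * x⁻¹)
      = ∑ y ∈ Finset.univ.filter (· ≠ (1:F)), quadraticChar F y := by
    apply Finset.sum_nbij' (i := fun x => 1 + a * x⁻¹) (j := fun y => a * (y - 1)⁻¹)
    · intro x hx
      simp only [Finset.mem_filter, Finset.mem_univ, true_and] at hx ⊢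
      intro h
      apply ha
      have : a * x⁻¹ = 0 := by linear_combination h
      rcases mul_eq_zero.1 this with h' | h'
      · exact h'
      · exact absurd (inv_eq_zero.1 h') hx
    · intro y hy
      simp only [Finset.mem_filter, Finset.mem_univ, true_and] at hy ⊢
      intro h
      rcases mul_eq_zero.1 h with h' | h'
      · exact ha h'
      · exact hy (by have := inv_eq_zero.1 h'; linear_combination this)
    · intro x hx
      simp only [Finset.mem_filter, Finset.mem_univ, true_and] at hx
      field_simp
      simp [ha]
    · intro y hy
      simp only [Finset.mem_filter, Finset.mem_univ, true_and] at hy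
      have h1 : y - 1 ≠ 0 := sub_ne_zero.2 hy
      field_simp
      ring
    · intro x hx; rfl
  have hflt : Finset.univ.filter (· ≠ (1:F)) = Finset.univ \ {1} := by
    ext y; simp
  have h2 : ∑ y ∈ Finset.univ.filter (· ≠ (1:F)), quadraticChar F y
      = (∑ y : F, quadraticChar F y) - quadraticChar F 1 := by
    rw [hflt, eq_sub_iff_add_eq,
      Finset.sum_eq_sum_sdiff_singleton_add (Finset.mem_univ (1:F))]
  rw [h0, h1, h2, quadraticChar_sum_zero hF]
  simp

lemma diag_sum (hF : ringChar F ≠ 2) :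
    ∑ x : F, quadraticChar F x * quadraticChar F x = (Fintype.card F : ℤ) - 1 := by
  classical
  have h : ∀ x : F, quadraticChar F x * quadraticChar F x
      = 1 - (if x = 0 then (1:ℤ) else 0) := by
    intro x
    by_cases hx : x = 0
    · simp [hx]
    · rw [if_neg hx, ← sq, quadraticChar_sq_one hx]; ring
  simp_rw [h]
  rw [Finset.sum_sub_distrib, Finset.sum_const, Finset.sum_ite_eq' Finset.univ (0:F)
    (fun _ => (1:ℤ))]
  simp
end aux

theorem legendre_matrix_identity {F : Type*} [Field F] [Fintype F]
    (hq : Odd (Fintype.card F)) :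
    (Matrix.of (fun i j : F => qchar (i + j))).transpose *
        (Matrix.of (fun i j : F => qchar (i + j)))
      = (Fintype.card F : ℤ) • (1 : Matrix F F ℤ)
          - Matrix.of (fun _ _ : F => (1 : ℤ)) := by
  classical
  have hF : ringChar F ≠ 2 := by
    intro h
    have h2 := FiniteField.even_card_of_char_two h
    rw [Nat.odd_iff] at hq
    omega
  ext i j
  rw [Matrix.mul_apply]
  simp only [Matrix.transpose_apply, Matrix.of_apply, Matrix.sub_apply, Matrix.smul_apply,
    Matrix.one_apply, smul_eq_mul]
  simp_rw [qchar_eq]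
  by_cases hij : i = j
  · subst hij
    have := Fintype.sum_equiv (Equiv.addRight i)
      (fun k => quadraticChar F (k + i) * quadraticChar F (k + i))
      (fun x => quadraticChar F x * quadraticChar F x)
      (by intro k; simp [Equiv.addRight])
    rw [this, diag_sum hF]
    simp
  · have ha : j - i ≠ 0 := sub_ne_zero.2 (Ne.symm hij)
    have := Fintype.sum_equiv (Equiv.addRight i)
      (fun k => quadraticChar F (k + i) * quadraticChar F (k + j))
      (fun x => quadraticChar F x * quadraticChar F (x + (j - i)))
      (by intro k; simp [Equiv.addRight])
    rw [this, key_sum hF ha]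
    simp [hij]
end

section
/- Let q be an odd prime power, χ the quadratic character of 𝔽_q, and S ⊆ 𝔽_q with |S| ≥ 1. Then there exists i ∈ 𝔽_q such that |∑_{j∈S} χ(i+j)| < √|S|, and consequently both the number of j∈S with χ(i+j)=+1 and the number with χ(i+j)=−1 are strictly less than |S|/2 + √|S|/2. -/
open scoped Classical

section Aux

variable {F : Type*} [Field F] [Fintype F] [DecidableEq F]

lemma qchar_eq_quadraticChar (x : F) : qchar x = quadraticChar F x := by
  rw [quadraticChar_apply, quadraticCharFun]
  unfold qchar
  split_ifs <;> rfl

lemma qchar_shift_sum (hF : ringChar F ≠ 2) {c : F} (hc : c ≠ 0) :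
    ∑ x : F, quadraticChar F x * quadraticChar F (x + c) = -1 := by
  rw [← Finset.sum_erase Finset.univ (a := (0 : F)) (by simp)]
  have key : ∀ x ∈ Finset.univ.erase (0 : F),
      quadraticChar F x * quadraticChar F (x + c) = quadraticChar F (1 + c * x⁻¹) := by
    intro x hx
    have hx0 : x ≠ 0 := Finset.ne_of_mem_erase hx
    have hxc : x + c = x * (1 + c * x⁻¹) := by field_simp
    rw [hxc, map_mul, ← mul_assoc, ← sq, quadraticChar_sq_one hx0, one_mul]
  rw [Finset.sum_congr rfl key]
  have hbij : ∑ x ∈ Finset.univ.erase (0 : F), quadraticChar F (1 + c * x⁻¹)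
      = ∑ y ∈ Finset.univ.erase (1 : F), quadraticChar F y := by
    apply Finset.sum_nbij' (i := fun x => 1 + c * x⁻¹) (j := fun y => c * (y - 1)⁻¹)
    · intro x hx
      have hx0 : x ≠ 0 := Finset.ne_of_mem_erase hx
      simp only [Finset.mem_erase, Finset.mem_univ, and_true]
      intro h
      have : c * x⁻¹ = 0 := by linear_combination h
      rcases mul_eq_zero.mp this with h' | h'
      · exact hc h'
      · exact hx0 (inv_eq_zero.mp h')
    · intro y hy
      have hy1 : y ≠ 1 := Finset.ne_of_mem_erase hy
      simp only [Finset.mem_erase, Finset.mem_univ, and_true]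
      intro h
      rcases mul_eq_zero.mp h with h' | h'
      · exact hc h'
      · exact hy1 (sub_eq_zero.mp (inv_eq_zero.mp h'))
    · intro x hx
      have hx0 : x ≠ 0 := Finset.ne_of_mem_erase hx
      field_simp
      simp [hc]
    · intro y hy
      have hy1 : y ≠ 1 := Finset.ne_of_mem_erase hy
      have : y - 1 ≠ 0 := sub_ne_zero.mpr hy1
      field_simp
      ring
    · intro x hx
      rfl
  rw [hbij, Finset.sum_erase_eq_sub (Finset.mem_univ (1 : F)),
    quadraticChar_sum_zero hF, map_one]
  ring

lemma qchar_sq_sum :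
    ∑ a : F, quadraticChar F a ^ 2 = (Fintype.card F : ℤ) - 1 := by
  rw [← Finset.sum_erase Finset.univ (a := (0 : F)) (by simp)]
  rw [Finset.sum_congr rfl (fun a ha => quadraticChar_sq_one (Finset.ne_of_mem_erase ha))]
  rw [Finset.sum_const, Finset.card_erase_of_mem (Finset.mem_univ _), Finset.card_univ]
  have : 1 ≤ Fintype.card F := Fintype.card_pos
  rw [nsmul_eq_mul, mul_one]
  omega

end Aux

theorem legendre_balanced_index_exists {F : Type*} [Field F] [Fintype F]
    (hq : Odd (Fintype.card F)) (S : Finset F) (hS : 1 ≤ S.card) :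
    ∃ i : F,
      |((∑ j ∈ S, qchar (i + j) : ℤ) : ℝ)| < Real.sqrt S.card ∧
      ((S.filter (fun j => qchar (i + j) = 1)).card : ℝ)
        < (S.card : ℝ) / 2 + Real.sqrt S.card / 2 ∧
      ((S.filter (fun j => qchar (i + j) = -1)).card : ℝ)
        < (S.card : ℝ) / 2 + Real.sqrt S.card / 2 := by
  classical
  have hF2 : ringChar F ≠ 2 := by
    intro h
    have h2 := FiniteField.even_card_of_char_two h
    rw [Nat.odd_iff] at hq
    omega
  have hTdef : ∀ i : F, (∑ j ∈ S, qchar (i + j)) = ∑ j ∈ S, quadraticChar F (i + j) :=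
    fun i => Finset.sum_congr rfl fun j _ => qchar_eq_quadraticChar _
  -- the inner double-sum identity
  have inner : ∀ j k : F, ∑ i : F, quadraticChar F (i + j) * quadraticChar F (i + k)
      = if j = k then (Fintype.card F : ℤ) - 1 else -1 := by
    intro j k
    by_cases hjk : j = k
    · subst hjk
      rw [if_pos rfl, ← qchar_sq_sum (F := F)]
      apply Fintype.sum_bijective (fun i : F => i + j) (Equiv.addRight j).bijective
      intro i
      rw [← sq]
    · rw [if_neg hjk]
      have hc : k - j ≠ 0 := sub_ne_zero.mpr (Ne.symm hjk)
      rw [← qchar_shift_sum hF2 hc]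
      apply Fintype.sum_bijective (fun i : F => i + j) (Equiv.addRight j).bijective
      intro i
      have : i + j + (k - j) = i + k := by ring
      rw [this]
  -- the key sum-of-squares identity
  have hkey : ∑ i : F, (∑ j ∈ S, quadraticChar F (i + j)) ^ 2
      = (S.card : ℤ) * ((Fintype.card F : ℤ) - S.card) := by
    have expand : ∀ i : F, (∑ j ∈ S, quadraticChar F (i + j)) ^ 2
        = ∑ j ∈ S, ∑ k ∈ S, quadraticChar F (i + j) * quadraticChar F (i + k) := by
      intro i
      rw [sq, Finset.sum_mul_sum]
    rw [Finset.sum_congr rfl fun i _ => expand i, Finset.sum_comm]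
    rw [Finset.sum_congr rfl fun j (_ : j ∈ S) => Finset.sum_comm]
    have hrow : ∀ j ∈ S, (∑ k ∈ S, ∑ i : F,
        quadraticChar F (i + j) * quadraticChar F (i + k))
        = (Fintype.card F : ℤ) - S.card := by
      intro j hj
      rw [Finset.sum_congr rfl fun k _ => inner j k]
      have hsplit : ∀ k : F, (if j = k then (Fintype.card F : ℤ) - 1 else -1)
          = (if j = k then (Fintype.card F : ℤ) else 0) - 1 := by
        intro k; split_ifs <;> ring
      rw [Finset.sum_congr rfl fun k _ => hsplit k, Finset.sum_sub_distrib,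
        Finset.sum_ite_eq, if_pos hj, Finset.sum_const, nsmul_eq_mul, mul_one]
    rw [Finset.sum_congr rfl hrow, Finset.sum_const, nsmul_eq_mul]
  -- find a good index
  have hcard1 : (1 : ℤ) ≤ (S.card : ℤ) := by exact_mod_cast hS
  have hcard2 : (S.card : ℤ) ≤ (Fintype.card F : ℤ) := by
    exact_mod_cast Finset.card_le_univ S
  have hlt : ∑ i : F, (∑ j ∈ S, quadraticChar F (i + j)) ^ 2
      < ∑ _i : F, (S.card : ℤ) := by
    rw [hkey, Finset.sum_const, Finset.card_univ, nsmul_eq_mul]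
    nlinarith
  obtain ⟨i, -, hi⟩ := Finset.exists_lt_of_sum_lt hlt
  refine ⟨i, ?_, ?_, ?_⟩
  all_goals {
    have hisq : (∑ j ∈ S, qchar (i + j)) ^ 2 < (S.card : ℤ) := by
      rw [hTdef i]; exact hi
    have habs : |((∑ j ∈ S, qchar (i + j) : ℤ) : ℝ)| < Real.sqrt S.card := by
      rw [Real.lt_sqrt (abs_nonneg _), sq_abs]
      exact_mod_cast hisq
    -- counting
    have tri : ∀ x : F, qchar x = 0 ∨ qchar x = 1 ∨ qchar x = -1 := by
      intro x; unfold qchar; split_ifs <;> simp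
    set P := S.filter fun j => qchar (i + j) = 1 with hP
    set N := S.filter fun j => qchar (i + j) = -1 with hN
    have hsum : (∑ j ∈ S, qchar (i + j)) = (P.card : ℤ) - (N.card : ℤ) := by
      rw [← Finset.sum_filter_add_sum_filter_not S (fun j => qchar (i + j) = 1)]
      have e1 : ∑ j ∈ S.filter (fun j => qchar (i + j) = 1), qchar (i + j)
          = (P.card : ℤ) := by
        rw [Finset.sum_congr rfl fun j hj => (Finset.mem_filter.mp hj).2]
        simp [hP]
      have e2 : ∑ j ∈ S.filter (fun j => ¬qchar (i + j) = 1), qchar (i + j)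
          = -(N.card : ℤ) := by
        rw [← Finset.sum_filter_add_sum_filter_not
          (S.filter fun j => ¬qchar (i + j) = 1) (fun j => qchar (i + j) = -1),
          Finset.filter_filter, Finset.filter_filter]
        have hA : (S.filter fun j => ¬qchar (i + j) = 1 ∧ qchar (i + j) = -1) = N := by
          rw [hN]
          apply Finset.filter_congr
          intro j _
          constructor
          · rintro ⟨-, h⟩; exact h
          · intro h; exact ⟨by rw [h]; decide, h⟩
        have hB : ∑ j ∈ S.filter fun j => ¬qchar (i + j) = 1 ∧ ¬qchar (i + j) = -1,
            qchar (i + j) = 0 := by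
          apply Finset.sum_eq_zero
          intro j hj
          obtain ⟨-, h1, h2⟩ := Finset.mem_filter.mp hj
          rcases tri (i + j) with h | h | h
          · exact h
          · exact absurd h h1
          · exact absurd h h2
        rw [hA, hB, add_zero]
        rw [Finset.sum_congr rfl fun j hj => (Finset.mem_filter.mp hj).2]
        simp
        rfl
      rw [e1, e2]
      ring
    have hdisj : Disjoint P N := by
      rw [Finset.disjoint_left]
      intro j hj1 hj2
      have h1 := (Finset.mem_filter.mp hj1).2
      have h2 := (Finset.mem_filter.mp hj2).2
      rw [h1] at h2
      exact absurd h2 (by decide)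
    have hPN : P.card + N.card ≤ S.card := by
      rw [← Finset.card_union_of_disjoint hdisj]
      exact Finset.card_le_card
        (Finset.union_subset (Finset.filter_subset _ _) (Finset.filter_subset _ _))
    have hre : ((∑ j ∈ S, qchar (i + j) : ℤ) : ℝ) = (P.card : ℝ) - (N.card : ℝ) := by
      exact_mod_cast hsum
    have hPNr : (P.card : ℝ) + (N.card : ℝ) ≤ (S.card : ℝ) := by exact_mod_cast hPN
    have h3 := le_abs_self ((∑ j ∈ S, qchar (i + j) : ℤ) : ℝ)
    have h4 := neg_abs_le ((∑ j ∈ S, qchar (i + j) : ℤ) : ℝ)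
    first
      | exact habs
      | linarith
  }
end
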